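/- arXiv:2202.08988 — 3 statements merged into one kernel-verified Lean document; each statement's English description precedes it below -/
import Mathlib

section
/- For n even, σ > 0, and k > 0, the integral over the n-dimensional ball of radius k of the standard isotropic Gaussian density with variance σ^2 per coordinate equals 1 - exp(-k^2/(2σ^2)) · Σ_{d=0}^{n/2 - 1} k^{2d}/(2^d σ^{2d} d!). -/
/-!
In polar coordinates `∫_{B_k} e^(-‖x‖²/(2σ²)) dx = n · vol(B₁) · ∫₀ᵏ r^(n-1) e^(-r²/(2σ²)) dr`, with
`vol(B₁) = π^(n/2)/(n/2)!`. For even `n` the radial integrand has an elementary antiderivative,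
because the truncated exponential series telescopes:
`d/dx (e^(-x) ∑_{d ≤ m} x^d/d!) = -e^(-x) x^m/m!`.
-/

open Real MeasureTheory Finset

open scoped Nat

lemma hasDerivAt_exp_neg_mul_sum_pow_div_factorial (m : ℕ) (x : ℝ) :
    HasDerivAt (fun x => exp (-x) * ∑ d ∈ range (m + 1), x ^ d / d !)
      (-(exp (-x) * (x ^ m / m !))) x := by
  have hexp : HasDerivAt (fun x => exp (-x)) (-exp (-x)) x := by
    simpa using (hasDerivAt_neg x).exp
  induction m with
  | zero => simpa using hexp
  | succ m ih =>
    have hterm : HasDerivAt (fun x : ℝ => x ^ (m + 1) / (m + 1)!) (x ^ m / m !) x := by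
      refine ((hasDerivAt_pow (m + 1) x).div_const _).congr_deriv ?_
      rw [Nat.add_sub_cancel, Nat.factorial_succ]
      push_cast
      field_simp
    refine ((ih.add (hexp.mul hterm)).congr_deriv (by ring)).congr_of_eventuallyEq
      (.of_forall fun x => ?_)
    simp only [sum_range_succ, Pi.add_apply, Pi.mul_apply]
    ring

lemma integral_pow_mul_exp_neg_sq_div {c : ℝ} (hc : c ≠ 0) (m : ℕ) (k : ℝ) :
    ∫ r in (0 : ℝ)..k, r ^ (2 * m + 1) * exp (-r ^ 2 / c) =
      c ^ (m + 1) * m ! / 2 *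
        (1 - exp (-k ^ 2 / c) * ∑ d ∈ range (m + 1), (k ^ 2 / c) ^ d / d !) := by
  set E : ℝ → ℝ := fun x => exp (-x) * ∑ d ∈ range (m + 1), x ^ d / (d ! : ℝ)
  have hE0 : E 0 = 1 := by simp [E, sum_range_succ']
  have hderiv (r : ℝ) : HasDerivAt (fun r => -(c ^ (m + 1) * m ! / 2) * E (r ^ 2 / c))
      (r ^ (2 * m + 1) * exp (-r ^ 2 / c)) r := by
    have hsq : HasDerivAt (fun r : ℝ => r ^ 2 / c) (2 * r / c) r := by
      simpa using (hasDerivAt_pow 2 r).div_const c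
    refine (((hasDerivAt_exp_neg_mul_sum_pow_div_factorial m _).comp r hsq).const_mul
      (-(c ^ (m + 1) * m ! / 2))).congr_deriv ?_
    rw [neg_div, div_pow, ← pow_mul]
    field_simp
    ring
  rw [intervalIntegral.integral_eq_sub_of_hasDerivAt (fun r _ => hderiv r)
    ((by fun_prop : Continuous fun r : ℝ => r ^ (2 * m + 1) * exp (-r ^ 2 / c)).intervalIntegrable
      0 k)]
  simp only [ne_eq, OfNat.ofNat_ne_zero, not_false_eq_true, zero_pow, zero_div, hE0, E, neg_div]
  ring

section Radial

variable {E F : Type*} [NormedAddCommGroup E] [NormedSpace ℝ E] [FiniteDimensional ℝ E]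
  [Nontrivial E] [MeasurableSpace E] [BorelSpace E] [NormedAddCommGroup F] [NormedSpace ℝ F]

lemma setIntegral_closedBall_fun_norm_addHaar (μ : Measure E) [μ.IsAddHaarMeasure]
    (f : ℝ → F) (r : ℝ) :
    ∫ x in Metric.closedBall (0 : E) r, f ‖x‖ ∂μ =
      Module.finrank ℝ E • μ.real (Metric.ball 0 1) •
        ∫ y in Set.Ioc 0 r, y ^ (Module.finrank ℝ E - 1) • f y := by
  have hind : (Metric.closedBall (0 : E) r).indicator (fun x => f ‖x‖) =
      fun x => (Set.Iic r).indicator f ‖x‖ := by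
    ext x
    simp only [Set.indicator, Metric.mem_closedBall, dist_zero_right, Set.mem_Iic]
  rw [← integral_indicator Metric.isClosed_closedBall.measurableSet, hind,
    integral_fun_norm_addHaar, ← Set.Ioi_inter_Iic, ← setIntegral_indicator measurableSet_Iic]
  simp_rw [Set.indicator_smul_apply]

end Radial

lemma setIntegral_closedBall_exp_neg_norm_sq_div {E : Type*} [NormedAddCommGroup E]
    [InnerProductSpace ℝ E] [FiniteDimensional ℝ E] [MeasurableSpace E] [BorelSpace E]
    {m : ℕ} (hE : Module.finrank ℝ E = 2 * (m + 1)) {c : ℝ} (hc : c ≠ 0) {k : ℝ} (hk : 0 ≤ k) :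
    ∫ x in Metric.closedBall (0 : E) k, exp (-‖x‖ ^ 2 / c) =
      (π * c) ^ (m + 1) * (1 - exp (-k ^ 2 / c) * ∑ d ∈ range (m + 1), (k ^ 2 / c) ^ d / d !) := by
  have : Nontrivial E := Module.nontrivial_of_finrank_pos (R := ℝ) (by omega)
  have hball : volume.real (Metric.ball (0 : E) 1) = π ^ (m + 1) / (m + 1)! := by
    rw [measureReal_def, InnerProductSpace.volume_ball_of_dim_even hE]
    simp [ENNReal.toReal_ofReal (by positivity : (0 : ℝ) ≤ π ^ (m + 1) / (m + 1)!)]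
  rw [setIntegral_closedBall_fun_norm_addHaar volume (fun r => exp (-r ^ 2 / c)), hE, hball,
    ← intervalIntegral.integral_of_le hk, show 2 * (m + 1) - 1 = 2 * m + 1 by omega]
  simp only [smul_eq_mul, nsmul_eq_mul, integral_pow_mul_exp_neg_sq_div hc, Nat.factorial_succ]
  push_cast
  field_simp
  ring

/-- For even `n`, the isotropic Gaussian of variance `σ^2` per coordinate assigns mass
`1 - exp(-k^2/(2σ^2)) ∑_{d=0}^{n/2-1} k^{2d}/(2^d σ^{2d} d!)` to the ball of radius `k`. -/
theorem stmt10 (n : ℕ) (hn : 0 < n) (hne : Even n) (σ k : ℝ) (hσ : 0 < σ) (hk : 0 < k) :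
    (∫ x in Metric.closedBall (0 : EuclideanSpace ℝ (Fin n)) k,
        (2 * π * σ ^ 2) ^ (-(n : ℝ) / 2) * Real.exp (-‖x‖ ^ 2 / (2 * σ ^ 2))) =
      1 - Real.exp (-k ^ 2 / (2 * σ ^ 2)) *
        ∑ d ∈ Finset.range (n / 2), k ^ (2 * d) / (2 ^ d * σ ^ (2 * d) * (d.factorial : ℝ)) := by
  obtain ⟨m, rfl⟩ : ∃ m, n = 2 * (m + 1) := by
    obtain ⟨j, hj⟩ := hne
    exact ⟨j - 1, by omega⟩
  have hnorm : (2 * π * σ ^ 2) ^ (-((2 * (m + 1) : ℕ) : ℝ) / 2) =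
      ((π * (2 * σ ^ 2)) ^ (m + 1))⁻¹ := by
    rw [show -((2 * (m + 1) : ℕ) : ℝ) / 2 = -((m + 1 : ℕ) : ℝ) by push_cast; ring,
      Real.rpow_neg (by positivity), Real.rpow_natCast, mul_left_comm, mul_assoc]
  have hsum : ∑ d ∈ range (m + 1), (k ^ 2 / (2 * σ ^ 2)) ^ d / d ! =
      ∑ d ∈ range (2 * (m + 1) / 2), k ^ (2 * d) / (2 ^ d * σ ^ (2 * d) * (d ! : ℝ)) := by
    rw [show 2 * (m + 1) / 2 = m + 1 by omega]
    refine sum_congr rfl fun d _ => ?_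
    rw [div_pow, mul_pow, ← pow_mul, ← pow_mul, div_div]
  rw [integral_const_mul, setIntegral_closedBall_exp_neg_norm_sq_div finrank_euclideanSpace_fin
    (by positivity) hk.le, hnorm, hsum, inv_mul_cancel_left₀ (by positivity)]
end

section
/- For positive integer c and real k ≥ 1, with σ^2 = (4π(c^2+c)/9)·((k+c)^3 - (k-1)^3), the series Σ_{l=1}^∞ l! 2^l k^{2l+1} / (σ^{2l+1} (2l+1)!) is bounded above by (√3/(12(c+1)√(πc))) · 3/(2πc(c+1)^2 - 3). -/
open Real Nat

/-!
Put `x = k / σ`. Since `(k + c)^3 - (k - 1)^3 ≥ 3(c + 1)k^2`, we get `σ^2 ≥ (2D/3) k^2` with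
`D = 2πc(c + 1)^2`, i.e. `2x^2 ≤ 3/D`. Together with `(2l + 1)! ≥ 6 · l!` the `l`-th term is
at most `(x/6)(2x^2)^l ≤ (x/6)(3/D)^l`, and the geometric series over `l ≥ 1` sums to
`(x/6) · 3/(D - 3)`. Finally `x/6 ≤ √3/(12(c + 1)√(πc))` is the same inequality
`2x^2 ≤ 3/D` after squaring.
-/

theorem Nat.six_mul_factorial_le_factorial_two_mul_add_one {n : ℕ} (hn : 1 ≤ n) :
    6 * n ! ≤ (2 * n + 1)! :=
  calc 6 * n ! ≤ (n + 2) * (n + 1) * n ! := by gcongr; nlinarith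
    _ = (n + 2)! := by simp only [factorial_succ]; ring
    _ ≤ (2 * n + 1)! := factorial_le (by omega)

lemma factorial_mul_two_pow_mul_pow_div_factorial_le {x : ℝ} (hx : 0 ≤ x) {n : ℕ}
    (hn : 1 ≤ n) :
    (n ! : ℝ) * 2 ^ n * x ^ (2 * n + 1) / (2 * n + 1)! ≤ x / 6 * (2 * x ^ 2) ^ n := by
  have hfac : (6 * n ! : ℝ) ≤ (2 * n + 1)! := by
    exact_mod_cast six_mul_factorial_le_factorial_two_mul_add_one hn
  rw [div_le_iff₀ (by positivity)]
  calc (n ! : ℝ) * 2 ^ n * x ^ (2 * n + 1) = x / 6 * (2 * x ^ 2) ^ n * (6 * n !) := by ring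
    _ ≤ x / 6 * (2 * x ^ 2) ^ n * (2 * n + 1)! := by gcongr

lemma tsum_le_of_le_geometric {f : ℕ → ℝ} {a q : ℝ} (hq0 : 0 ≤ q) (hq1 : q < 1)
    (hf0 : ∀ n, 0 ≤ f n) (hf : ∀ n, f n ≤ a * q ^ (n + 1)) :
    ∑' n, f n ≤ a * q / (1 - q) := by
  have hg : HasSum (fun n ↦ a * q ^ (n + 1)) (a * q / (1 - q)) := by
    rw [show (fun n ↦ a * q ^ (n + 1)) = fun n ↦ a * q * q ^ n from funext fun n ↦ by ring,
      div_eq_mul_inv]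
    exact (hasSum_geometric_of_lt_one hq0 hq1).mul_left (a * q)
  exact hasSum_le hf (Summable.of_nonneg_of_le hf0 hf hg.summable).hasSum hg

lemma three_mul_add_one_mul_sq_le_pow_three_sub_pow_three {c k : ℝ} (hc : 1 ≤ c)
    (hk : 0 ≤ k) :
    3 * (c + 1) * k ^ 2 ≤ (k + c) ^ 3 - (k - 1) ^ 3 := by
  have hdiff : (k + c) ^ 3 - (k - 1) ^ 3 - 3 * (c + 1) * k ^ 2
      = (c + 1) * (3 * k * (c - 1) + ((c - 1 / 2) ^ 2 + 3 / 4)) := by ring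
  have hrhs : 0 ≤ (c + 1) * (3 * k * (c - 1) + ((c - 1 / 2) ^ 2 + 3 / 4)) := by
    have hc1 : 0 ≤ c - 1 := by linarith
    positivity
  linarith

lemma two_mul_sq_div_sqrt_le {c k : ℝ} (hc : 1 ≤ c) (hk : 0 < k) :
    2 * (k / √(4 * π * (c ^ 2 + c) / 9 * ((k + c) ^ 3 - (k - 1) ^ 3))) ^ 2 ≤
      3 / (2 * π * c * (c + 1) ^ 2) := by
  have hcube := three_mul_add_one_mul_sq_le_pow_three_sub_pow_three hc hk.le
  have hS : 0 < 4 * π * (c ^ 2 + c) / 9 * ((k + c) ^ 3 - (k - 1) ^ 3) := by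
    have : 0 < (k + c) ^ 3 - (k - 1) ^ 3 := lt_of_lt_of_le (by positivity) hcube
    positivity
  rw [div_pow, sq_sqrt hS.le, mul_div_assoc', div_le_div_iff₀ hS (by positivity)]
  calc 2 * k ^ 2 * (2 * π * c * (c + 1) ^ 2)
      = 3 * (4 * π * (c ^ 2 + c) / 9 * (3 * (c + 1) * k ^ 2)) := by ring
    _ ≤ 3 * (4 * π * (c ^ 2 + c) / 9 * ((k + c) ^ 3 - (k - 1) ^ 3)) := by gcongr

/-- With `σ = √((4π(c^2+c)/9)((k+c)^3-(k-1)^3))`, the series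
`∑_{l=1}^∞ l! 2^l k^{2l+1}/(σ^{2l+1} (2l+1)!)` is at most
`(√3/(12(c+1)√(πc))) · 3/(2πc(c+1)^2 - 3)`. -/
theorem stmt13 (c : ℕ) (hc : 0 < c) (k : ℝ) (hk : 1 ≤ k) :
    (∑' l : ℕ, ((l + 1).factorial : ℝ) * 2 ^ (l + 1) * k ^ (2 * (l + 1) + 1) /
        ((Real.sqrt ((4 * π * ((c : ℝ) ^ 2 + c) / 9) * ((k + c) ^ 3 - (k - 1) ^ 3)))
            ^ (2 * (l + 1) + 1) * ((2 * (l + 1) + 1).factorial : ℝ))) ≤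
      (Real.sqrt 3 / (12 * ((c : ℝ) + 1) * Real.sqrt (π * c))) *
        (3 / (2 * π * c * ((c : ℝ) + 1) ^ 2 - 3)) := by
  have hc1 : (1 : ℝ) ≤ c := by exact_mod_cast hc
  set σ := √(4 * π * ((c : ℝ) ^ 2 + c) / 9 * ((k + c) ^ 3 - (k - 1) ^ 3))
  set D : ℝ := 2 * π * c * (c + 1) ^ 2
  set A := √3 / (12 * ((c : ℝ) + 1) * √(π * c))
  have hD : 3 < D :=
    calc (3 : ℝ) < 2 * π * 1 * (1 + 1) ^ 2 := by nlinarith [pi_gt_three]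
      _ ≤ 2 * π * c * (c + 1) ^ 2 := by gcongr
  have hx2 : 2 * (k / σ) ^ 2 ≤ 3 / D := two_mul_sq_div_sqrt_le hc1 (by linarith)
  have hxA : k / σ / 6 ≤ A := by
    rw [← sq_le_sq₀ (by positivity) (by positivity)]
    calc (k / σ / 6) ^ 2 = 2 * (k / σ) ^ 2 / 72 := by ring
      _ ≤ 3 / D / 72 := by gcongr
      _ = A ^ 2 := by
        rw [div_pow, mul_pow, mul_pow, sq_sqrt (by norm_num), sq_sqrt (by positivity)]
        field_simp
        ring
  have hterm (n : ℕ) : ((n + 1)! : ℝ) * 2 ^ (n + 1) * k ^ (2 * (n + 1) + 1) /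
      (σ ^ (2 * (n + 1) + 1) * (2 * (n + 1) + 1)!) ≤ A * (3 / D) ^ (n + 1) :=
    calc _ = ((n + 1)! : ℝ) * 2 ^ (n + 1) * (k / σ) ^ (2 * (n + 1) + 1) /
          (2 * (n + 1) + 1)! := by rw [div_pow]; ring
      _ ≤ k / σ / 6 * (2 * (k / σ) ^ 2) ^ (n + 1) :=
          factorial_mul_two_pow_mul_pow_div_factorial_le (by positivity) (by omega)
      _ ≤ A * (3 / D) ^ (n + 1) := by gcongr
  calc _ ≤ A * (3 / D) / (1 - 3 / D) :=
        tsum_le_of_le_geometric (by positivity) ((div_lt_one (by linarith)).2 hD)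
          (fun n ↦ by positivity) hterm
    _ = A * (3 / (D - 3)) := by
        field_simp [(by linarith : D - 3 ≠ 0)]
end

section
/- Let c be a fixed positive integer and n ≥ 5 an odd integer, and let σ_k^2 = (c^2+c)/3 · (π^{n/2}/Γ(n/2+1))·((k+c)^n - (k-1)^n). Then √(2/π) · exp(-k^2/(2σ_k^2)) · Σ'_{j≥n} k^j/(σ_k^j j!!) → 0 as k → ∞, where the primed sum is over j = n, n+2, n+4, .... -/
open Real Filter Nat

/-!
Write `σ_k² = A · ((k + c)ⁿ - (k - 1)ⁿ)` with `A > 0`. Since `(k + c)ⁿ - (k - 1)ⁿ ≥ kⁿ⁻¹` and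
`n - 1 > 2`, we get `k² = o(σ_k²)`, i.e. `r_k := k / σ_k → 0`. The series is
`T(r_k)` with `T(r) = ∑ r^(n+2j) / (n+2j)‼`, and `|T(r)| ≤ |r|ⁿ / (1 - r²)` by comparison with a
geometric series, so `T(r_k) → 0`; the prefactor `√(2/π) · exp(-k²/(2σ_k²))` lies in `[0, 1]`.
-/

open Asymptotics

theorem norm_tsum_pow_div_doubleFactorial_le (n : ℕ) {r : ℝ} (hr : |r| < 1) :
    ‖∑' j : ℕ, r ^ (n + 2 * j) / (((n + 2 * j)‼ : ℕ) : ℝ)‖ ≤ |r| ^ n / (1 - r ^ 2) := by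
  have hr2 : r ^ 2 < 1 := by rw [← sq_abs]; nlinarith [abs_nonneg r]
  have hgeom : HasSum (fun j : ℕ => |r| ^ n * (r ^ 2) ^ j) (|r| ^ n / (1 - r ^ 2)) :=
    (hasSum_geometric_of_lt_one (sq_nonneg r) hr2).mul_left _
  refine tsum_of_norm_bounded hgeom fun j => ?_
  have hd : (1 : ℝ) ≤ (((n + 2 * j)‼ : ℕ) : ℝ) := by
    exact_mod_cast Nat.one_le_iff_ne_zero.2 (Nat.doubleFactorial_pos _).ne'
  calc ‖r ^ (n + 2 * j) / (((n + 2 * j)‼ : ℕ) : ℝ)‖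
      = |r| ^ (n + 2 * j) / (((n + 2 * j)‼ : ℕ) : ℝ) := by
        rw [norm_div, norm_pow, Real.norm_eq_abs, Real.norm_natCast]
    _ ≤ |r| ^ (n + 2 * j) := div_le_self (by positivity) hd
    _ = |r| ^ n * (r ^ 2) ^ j := by rw [pow_add, pow_mul, sq_abs]

theorem tendsto_tsum_pow_div_doubleFactorial {n : ℕ} (hn : n ≠ 0) :
    Tendsto (fun r : ℝ => ∑' j : ℕ, r ^ (n + 2 * j) / (((n + 2 * j)‼ : ℕ) : ℝ))
      (nhds 0) (nhds 0) := by
  have hbound : Tendsto (fun r : ℝ => |r| ^ n / (1 - r ^ 2)) (nhds 0) (nhds 0) := by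
    have : ContinuousAt (fun r : ℝ => |r| ^ n / (1 - r ^ 2)) 0 := by
      fun_prop (disch := norm_num)
    simpa [hn] using this.tendsto
  have hsmall : ∀ᶠ r : ℝ in nhds 0, |r| < 1 := by
    simpa using (continuous_abs.tendsto (0 : ℝ)).eventually_lt_const (by norm_num : |(0 : ℝ)| < 1)
  exact squeeze_zero_norm'
    (hsmall.mono fun r hr => norm_tsum_pow_div_doubleFactorial_le n hr) hbound

theorem pow_le_add_pow_sub_sub_one_pow (m : ℕ) {c k : ℝ} (hc : 0 ≤ c) (hk : 1 ≤ k) :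
    k ^ m ≤ (k + c) ^ (m + 1) - (k - 1) ^ (m + 1) := by
  have hkc : k ^ m ≤ (k + c) ^ m := by gcongr; linarith
  have hk1 : (k - 1) * (k - 1) ^ m ≤ (k - 1) * (k + c) ^ m := by gcongr; linarith
  have hckc : 0 ≤ c * (k + c) ^ m := mul_nonneg hc (pow_nonneg (by linarith) m)
  calc k ^ m ≤ (c + 1) * (k + c) ^ m := by linarith
    _ = (k + c) * (k + c) ^ m - (k - 1) * (k + c) ^ m := by ring
    _ ≤ (k + c) ^ (m + 1) - (k - 1) ^ (m + 1) := by rw [_root_.pow_succ', _root_.pow_succ']; linarith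

theorem isBigO_pow_add_pow_sub_sub_one_pow (m : ℕ) {c : ℝ} (hc : 0 ≤ c) :
    (fun k : ℝ => k ^ m) =O[atTop] fun k => (k + c) ^ (m + 1) - (k - 1) ^ (m + 1) := by
  refine IsBigO.of_bound 1 ?_
  filter_upwards [eventually_ge_atTop 1] with k hk
  have hle := pow_le_add_pow_sub_sub_one_pow m hc hk
  have hkm : 0 ≤ k ^ m := by positivity
  rw [Real.norm_of_nonneg hkm, Real.norm_of_nonneg (hkm.trans hle), one_mul]
  exact hle

theorem tendsto_div_sqrt_of_isLittleO {S : ℝ → ℝ} (h : (fun k => k ^ 2) =o[atTop] S) :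
    Tendsto (fun k => k / √(S k)) atTop (nhds 0) := by
  have hsqrt : Tendsto (fun k => √(k ^ 2 / S k)) atTop (nhds 0) := by
    simpa [Function.comp_def] using (continuous_sqrt.tendsto 0).comp h.tendsto_div_nhds_zero
  refine hsqrt.congr' ?_
  filter_upwards [eventually_ge_atTop 0] with k hk
  rw [Real.sqrt_div (sq_nonneg k), Real.sqrt_sq hk]

theorem sqrt_two_div_pi_mul_exp_le_one {x : ℝ} (hx : x ≤ 0) : √(2 / π) * exp x ≤ 1 :=
  mul_le_one₀ (Real.sqrt_le_one.2 ((div_le_one pi_pos).2 two_le_pi)) (exp_pos x).le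
    (exp_le_one_iff.2 hx)

theorem stmt17_general (n c : ℕ) (hn : 5 ≤ n) (hc : 1 ≤ c) :
    Tendsto (fun k : ℝ =>
        Real.sqrt (2 / π) *
          Real.exp (-k ^ 2 / (2 * (((c : ℝ) ^ 2 + c) / 3 *
              (π ^ ((n : ℝ) / 2) / Real.Gamma ((n : ℝ) / 2 + 1) *
                ((k + c) ^ n - (k - 1) ^ n))))) *
          ∑' j : ℕ, k ^ (n + 2 * j) /
            ((Real.sqrt (((c : ℝ) ^ 2 + c) / 3 *
                (π ^ ((n : ℝ) / 2) / Real.Gamma ((n : ℝ) / 2 + 1) *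
                  ((k + c) ^ n - (k - 1) ^ n)))) ^ (n + 2 * j) * (((n + 2 * j)‼ : ℕ) : ℝ)))
      atTop (nhds 0) := by
  obtain ⟨m, rfl⟩ : ∃ m, n = m + 1 := ⟨n - 1, by omega⟩
  set A : ℝ := ((c : ℝ) ^ 2 + c) / 3
  set B : ℝ := π ^ ((m + 1 : ℕ) / 2 : ℝ) / Real.Gamma ((m + 1 : ℕ) / 2 + 1)
  have hA : 0 < A := by positivity
  have hB : 0 < B := div_pos (rpow_pos_of_pos pi_pos _) (Gamma_pos_of_pos (by positivity))
  set P : ℝ → ℝ := fun k => (k + c) ^ (m + 1) - (k - 1) ^ (m + 1)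
  have hvar : (fun k : ℝ => k ^ 2) =o[atTop] fun k => A * (B * P k) :=
    (isLittleO_pow_pow_atTop_of_lt (by omega : 2 < m)).trans_isBigO
      (((isBigO_pow_add_pow_sub_sub_one_pow m c.cast_nonneg).const_mul_right hB.ne').const_mul_right
        hA.ne')
  have hseries := ((tendsto_tsum_pow_div_doubleFactorial m.succ_ne_zero).comp
    (tendsto_div_sqrt_of_isLittleO hvar)).norm
  rw [norm_zero] at hseries
  refine squeeze_zero_norm' ?_ hseries
  filter_upwards [eventually_ge_atTop 1] with k hk
  have hP : 0 ≤ P k := (pow_nonneg (by linarith) m).trans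
    (pow_le_add_pow_sub_sub_one_pow m c.cast_nonneg hk)
  have hexp : -k ^ 2 / (2 * (A * (B * P k))) ≤ 0 :=
    div_nonpos_of_nonpos_of_nonneg (neg_nonpos.2 (sq_nonneg k)) (by positivity)
  simp only [Function.comp_apply, div_pow, div_div]
  rw [norm_mul, Real.norm_of_nonneg (by positivity)]
  exact mul_le_of_le_one_left (norm_nonneg _) (sqrt_two_div_pi_mul_exp_le_one hexp)

/-- For odd `n ≥ 5` and fixed `c ≥ 1`, with
`σ_k^2 = (c^2+c)/3 · (π^{n/2}/Γ(n/2+1))((k+c)^n - (k-1)^n)`, the quantity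
`√(2/π) exp(-k^2/(2σ_k^2)) ∑'_{j ≥ n, j ≡ n [2]} k^j/(σ_k^j j‼)` tends to `0`
as `k → ∞`. -/
theorem stmt17 (n c : ℕ) (hn : 5 ≤ n) (hno : Odd n) (hc : 1 ≤ c) :
    Tendsto (fun k : ℝ =>
        Real.sqrt (2 / π) *
          Real.exp (-k ^ 2 / (2 * (((c : ℝ) ^ 2 + c) / 3 *
              (π ^ ((n : ℝ) / 2) / Real.Gamma ((n : ℝ) / 2 + 1) *
                ((k + c) ^ n - (k - 1) ^ n))))) *
          ∑' j : ℕ, k ^ (n + 2 * j) /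
            ((Real.sqrt (((c : ℝ) ^ 2 + c) / 3 *
                (π ^ ((n : ℝ) / 2) / Real.Gamma ((n : ℝ) / 2 + 1) *
                  ((k + c) ^ n - (k - 1) ^ n)))) ^ (n + 2 * j) * (((n + 2 * j)‼ : ℕ) : ℝ)))
      atTop (nhds 0) :=
  stmt17_general n c hn hc
end
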